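/- Let A be a Hopf algebra over a field k with bijective antipode S. If M is an injective left A^e-module (equivalently an injective A-bimodule), then the left adjoint module L(M), i.e. M with A-action a·m = Σ a₁ m S(a₂), is an injective left A-module. -/

import Mathlib

/-!
STATEMENT 12: Let `A` be a Hopf algebra over `k` with bijective antipode `S`.  If
`M` is an injective left `A^e`-module (`A^e = A ⊗ Aᵐᵒᵖ`), then the left adjoint
module `L(M)` — the space `M` with `A`-action `a · m = Σ a₁ m S(a₂)`, i.e. the
restriction of `M` along `a ↦ Σ a₁ ⊗ (S a₂)ᵒᵖ` — is an injective left `A`-module.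
-/

open TensorProduct CategoryTheory MulOpposite

noncomputable section

variable (k A : Type) [Field k] [Ring A] [HopfAlgebra k A]

/-- The linear map `a ↦ Σ a₁ ⊗ (S a₂)ᵒᵖ : A → A ⊗ Aᵐᵒᵖ`; scalar action by its values
gives the left adjoint action `a · m = Σ a₁ m S(a₂)` on any `A^e`-module. -/
def adMap : A →ₗ[k] A ⊗[k] Aᵐᵒᵖ :=
  (TensorProduct.map LinearMap.id
    ((opLinearEquiv k).toLinearMap ∘ₗ (HopfAlgebra.antipode (R := k) (A := A)))) ∘ₗ Coalgebra.comul

end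

/-!
The adjoint-module functor `L` has an exact left adjoint: an `A`-module `X` induces the
bimodule `A ⊗ X` with `a • (u ⊗ x) • b = Σ a₂ u b ⊗ a₁ x`. By coassociativity and
`Σ S(a₁) a₂ = ε(a)`, an `A`-linear map `ψ : X → L(M)` lifts to the bimodule map
`u ⊗ x ↦ ψ(x) u`; by `Σ a₁ S(a₂) = ε(a)`, the map `x ↦ 1 ⊗ x` is `A`-linear into `L(A ⊗ X)`.
As `A` is flat over `k`, `A ⊗ -` preserves injections. So to extend `ψ` along an injection
`X → Y`, extend its lift along `A ⊗ X → A ⊗ Y` using the injectivity of `M`, and restrict the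
extension to `1 ⊗ Y`.
-/

open Coalgebra HopfAlgebra

universe u

section AdMap

variable {k A : Type} [Field k] [Ring A] [HopfAlgebra k A]

lemma adMap_eq_sum {ι : Type*} {a : A} (r : Repr k a ι) :
    adMap k A a = ∑ i ∈ r.index, r.left i ⊗ₜ op (antipode k (r.right i)) := by
  rw [adMap, LinearMap.comp_apply, ← r.eq, map_sum]
  rfl

lemma adMap_one : adMap k A 1 = 1 := by
  simp [adMap, Algebra.TensorProduct.one_def]

lemma adMap_algebraMap (c : k) : adMap k A (algebraMap k A c) = algebraMap k _ c := by
  rw [Algebra.algebraMap_eq_smul_one, map_smul, adMap_one, Algebra.algebraMap_eq_smul_one]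

end AdMap

namespace HopfAlgebra

section Identities

variable {R A ι : Type*} {κ : ι → Type*} [CommSemiring R] [Semiring A] [HopfAlgebra R A]

-- `r₁` splits the left legs of `r`; in Sweedler notation the two identities read
-- `Σ a₁₁ ⊗ S(a₁₂) a₂ = a ⊗ 1` and `Σ a₁₂ S(a₂) ⊗ a₁₁ = 1 ⊗ a`.
lemma sum_tmul_antipode_mul_eq {a : A} (r : Repr R a ι) (r₁ : ∀ i, Repr R (r.left i) (κ i)) :
    ∑ i ∈ r.index, ∑ j ∈ (r₁ i).index,
      (r₁ i).left j ⊗ₜ[R] (antipode R ((r₁ i).right j) * r.right i) = a ⊗ₜ[R] (1 : A) := by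
  have h := congr(LinearMap.lTensor A (LinearMap.mul' R A ∘ₗ (antipode R).rTensor A)
    $(sum_tmul_tmul_eq r r₁ fun i => ℛ R (r.right i)))
  simp only [map_sum, LinearMap.lTensor_tmul, LinearMap.comp_apply, LinearMap.rTensor_tmul,
    LinearMap.mul'_apply] at h
  simp only [h, ← tmul_sum, sum_antipode_mul_eq_algebraMap_counit]
  simpa only [map_sum, LinearMap.lTensor_tmul, Algebra.linearMap_apply, map_one]
    using congr(LinearMap.lTensor A (Algebra.linearMap R A) $(sum_tmul_counit_eq r))

lemma sum_mul_antipode_tmul_eq {a : A} (r : Repr R a ι) (r₁ : ∀ i, Repr R (r.left i) (κ i)) :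
    ∑ i ∈ r.index, ∑ j ∈ (r₁ i).index,
      ((r₁ i).right j * antipode R (r.right i)) ⊗ₜ[R] (r₁ i).left j = (1 : A) ⊗ₜ[R] a := by
  have h := congr(TensorProduct.comm R A A (LinearMap.lTensor A
    (LinearMap.mul' R A ∘ₗ (antipode R).lTensor A) $(sum_tmul_tmul_eq r r₁ fun i => ℛ R (r.right i))))
  simp only [map_sum, LinearMap.lTensor_tmul, LinearMap.comp_apply,
    LinearMap.mul'_apply, comm_tmul] at h
  simp only [h, ← sum_tmul, sum_mul_antipode_eq_algebraMap_counit]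
  simpa only [map_sum, LinearMap.lTensor_tmul, Algebra.linearMap_apply, map_one, comm_tmul]
    using congr(TensorProduct.comm R A A
      (LinearMap.lTensor A (Algebra.linearMap R A) $(sum_tmul_counit_eq r)))

end Identities

section Action

variable (k A X : Type*) [CommSemiring k] [Semiring A] [HopfAlgebra k A]
  [AddCommMonoid X] [Module k X]

def rightMulAction : Aᵐᵒᵖ →ₐ[k] Module.End k (A ⊗[k] X) :=
  Module.endTensorEndAlgHom.comp <|
    Algebra.TensorProduct.includeLeft.comp (Algebra.lsmul k k A)

variable [Module A X] [IsScalarTower k A X]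

def diagonalAction : A →ₐ[k] Module.End k (A ⊗[k] X) :=
  Module.endTensorEndAlgHom.comp <|
    (Algebra.TensorProduct.map (Algebra.lsmul k k A) (Algebra.lsmul k k X)).comp <|
      (Algebra.TensorProduct.comm k A A).toAlgHom.comp (Bialgebra.comulAlgHom k A)

variable {k A X}

omit [Module A X] [IsScalarTower k A X] in
lemma rightMulAction_tmul (q : Aᵐᵒᵖ) (u : A) (x : X) :
    rightMulAction k A X q (u ⊗ₜ x) = (u * unop q) ⊗ₜ x := by
  simp [rightMulAction, Module.endTensorEndAlgHom_apply]

lemma diagonalAction_tmul {ι : Type*} {a : A} (r : Repr k a ι) (u : A) (x : X) :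
    diagonalAction k A X a (u ⊗ₜ x) = ∑ i ∈ r.index, (r.right i * u) ⊗ₜ (r.left i • x) := by
  rw [diagonalAction, AlgHom.comp_apply, AlgHom.comp_apply, AlgHom.comp_apply,
    Bialgebra.comulAlgHom_apply, ← r.eq]
  simp [map_sum, LinearMap.sum_apply, Module.endTensorEndAlgHom_apply]

lemma commute_diagonalAction_rightMulAction (a : A) (q : Aᵐᵒᵖ) :
    Commute (diagonalAction k A X a) (rightMulAction k A X q) :=
  TensorProduct.ext' fun u x => by
    simp only [Module.End.mul_apply, rightMulAction_tmul, diagonalAction_tmul (ℛ k a), map_sum,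
      mul_assoc]

variable (k A X)

def bimoduleAction : A ⊗[k] Aᵐᵒᵖ →ₐ[k] Module.End k (A ⊗[k] X) :=
  Algebra.TensorProduct.lift (diagonalAction k A X) (rightMulAction k A X)
    commute_diagonalAction_rightMulAction

variable {k A X}

lemma bimoduleAction_tmul_tmul {ι : Type*} {p : A} (r : Repr k p ι) (q : Aᵐᵒᵖ) (u : A) (x : X) :
    bimoduleAction k A X (p ⊗ₜ q) (u ⊗ₜ x) =
      ∑ i ∈ r.index, (r.right i * (u * unop q)) ⊗ₜ (r.left i • x) := by
  rw [bimoduleAction, Algebra.TensorProduct.lift_tmul, Module.End.mul_apply, rightMulAction_tmul,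
    diagonalAction_tmul r]

end Action

def InducedBimodule (k A X : Type*) [CommSemiring k] [AddCommMonoid A] [Module k A]
    [AddCommMonoid X] [Module k X] : Type _ :=
  A ⊗[k] X

namespace InducedBimodule

section Ring

variable {k A X Y : Type*} [CommRing k] [Ring A] [HopfAlgebra k A] [AddCommGroup X] [Module k X]

instance : AddCommGroup (InducedBimodule k A X) := inferInstanceAs (AddCommGroup (A ⊗[k] X))

instance : Module k (InducedBimodule k A X) := inferInstanceAs (Module k (A ⊗[k] X))

def mk (u : A) (x : X) : InducedBimodule k A X := u ⊗ₜ[k] x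

@[elab_as_elim]
lemma induction_on {P : InducedBimodule k A X → Prop} (n : InducedBimodule k A X) (zero : P 0)
    (mk : ∀ u x, P (mk u x)) (add : ∀ m n, P m → P n → P (m + n)) : P n :=
  TensorProduct.induction_on n zero mk add

def unit : X →ₗ[k] InducedBimodule k A X :=
  TensorProduct.mk k A X 1

lemma unit_apply (x : X) : unit x = (mk 1 x : InducedBimodule k A X) :=
  rfl

variable [Module A X] [IsScalarTower k A X]

-- The `Module.End`-action is passed by hand: instance search does not see through the synonym.
instance : Module (A ⊗[k] Aᵐᵒᵖ) (InducedBimodule k A X) :=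
  @Module.compHom _ _ (InducedBimodule k A X) _ _ (Module.End.applyModule (R := k) (M := A ⊗[k] X))
    _ (bimoduleAction k A X).toRingHom

lemma tmul_smul_mk {ι : Type*} {p : A} (r : Repr k p ι) (q : Aᵐᵒᵖ) (u : A) (x : X) :
    (p ⊗ₜ[k] q) • (mk u x : InducedBimodule k A X) =
      ∑ i ∈ r.index, mk (r.right i * (u * unop q)) (r.left i • x) :=
  bimoduleAction_tmul_tmul r q u x

variable {P : Type*} [AddCommGroup P] [Module k P] [Module (A ⊗[k] Aᵐᵒᵖ) P]

def ofLinearMap (F : InducedBimodule k A X →ₗ[k] P)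
    (hF : ∀ (p : A) (q : Aᵐᵒᵖ) (u : A) (x : X),
      F ((p ⊗ₜ[k] q) • (mk u x : InducedBimodule k A X)) = (p ⊗ₜ[k] q) • F (mk u x)) :
    InducedBimodule k A X →ₗ[A ⊗[k] Aᵐᵒᵖ] P where
  toFun := F
  map_add' := map_add F
  map_smul' e n := by
    rw [RingHom.id_apply]
    induction e using TensorProduct.induction_on with
    | zero => rw [zero_smul (A ⊗[k] Aᵐᵒᵖ) n, zero_smul (A ⊗[k] Aᵐᵒᵖ) (F n), map_zero]
    | add e₁ e₂ h₁ h₂ => rw [add_smul, add_smul, map_add, h₁, h₂]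
    | tmul p q =>
      induction n using induction_on with
      | zero => rw [smul_zero, map_zero, smul_zero]
      | add n₁ n₂ h₁ h₂ => rw [smul_add, map_add, h₁, h₂, map_add, smul_add]
      | mk u x => exact hF p q u x

lemma ofLinearMap_apply (F : InducedBimodule k A X →ₗ[k] P) (hF) (n : InducedBimodule k A X) :
    ofLinearMap F hF n = F n :=
  rfl

variable [AddCommGroup Y] [Module k Y] [Module A Y] [IsScalarTower k A Y]

def mapLinear (f : X →ₗ[A] Y) : InducedBimodule k A X →ₗ[k] InducedBimodule k A Y :=
  (f.restrictScalars k).lTensor A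

lemma mapLinear_mk (f : X →ₗ[A] Y) (u : A) (x : X) :
    mapLinear f (mk u x : InducedBimodule k A X) = mk u (f x) :=
  rfl

def map (f : X →ₗ[A] Y) : InducedBimodule k A X →ₗ[A ⊗[k] Aᵐᵒᵖ] InducedBimodule k A Y :=
  ofLinearMap (mapLinear f) fun p q u x => by
    simp only [tmul_smul_mk (ℛ k p), map_sum, mapLinear_mk, map_smul]

lemma map_injective [Module.Flat k A] (f : X →ₗ[A] Y) (hf : Function.Injective f) :
    Function.Injective (map (k := k) f) :=
  Module.Flat.lTensor_preserves_injective_linearMap (f.restrictScalars k) hf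

end Ring

section Adjoint

variable {k A : Type} [Field k] [Ring A] [HopfAlgebra k A]
  {X : Type*} [AddCommGroup X] [Module k X] [Module A X] [IsScalarTower k A X]
  {M : Type*} [AddCommGroup M] [Module (A ⊗[k] Aᵐᵒᵖ) M] [Module k M]
  [IsScalarTower k (A ⊗[k] Aᵐᵒᵖ) M]

lemma adMap_smul_unit (a : A) (x : X) :
    adMap k A a • (unit x : InducedBimodule k A X) = unit (a • x) := by
  simp only [unit_apply, adMap_eq_sum (ℛ k a), Finset.sum_smul, tmul_smul_mk (ℛ k _), one_mul,
    unop_op]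
  have h := congr(((LinearMap.toSpanSingleton A X x).restrictScalars k).lTensor A
    $(sum_mul_antipode_tmul_eq (ℛ k a) fun i => ℛ k ((ℛ k a).left i)))
  simp only [map_sum, LinearMap.lTensor_tmul, LinearMap.restrictScalars_apply,
    LinearMap.toSpanSingleton_apply] at h
  exact h

def liftLinear (ψ : X →ₗ[k] M) : InducedBimodule k A X →ₗ[k] M :=
  TensorProduct.lift <| LinearMap.mk₂ k (fun u x => ((1 : A) ⊗ₜ[k] op u) • ψ x)
    (fun u v x => by rw [MulOpposite.op_add, tmul_add, add_smul])
    (fun c u x => by rw [MulOpposite.op_smul, tmul_smul, smul_assoc])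
    (fun u x y => by rw [map_add, smul_add])
    (fun c u x => by rw [map_smul, smul_comm])

omit [Module A X] [IsScalarTower k A X] in
lemma liftLinear_mk (ψ : X →ₗ[k] M) (u : A) (x : X) :
    liftLinear ψ (mk u x) = ((1 : A) ⊗ₜ[k] op u) • ψ x :=
  rfl

lemma liftLinear_tmul_smul_mk (ψ : X →ₗ[k] M) (hψ : ∀ a x, ψ (a • x) = adMap k A a • ψ x)
    (p : A) (q : Aᵐᵒᵖ) (u : A) (x : X) :
    liftLinear ψ ((p ⊗ₜ[k] q) • (mk u x : InducedBimodule k A X)) =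
      (p ⊗ₜ[k] q) • liftLinear ψ (mk u x) := by
  have hopf := congr(((opLinearEquiv k).toLinearMap ∘ₗ LinearMap.mulRight k (u * unop q)).lTensor A
    $(sum_tmul_antipode_mul_eq (ℛ k p) fun i => ℛ k ((ℛ k p).left i)))
  simp only [map_sum, LinearMap.lTensor_tmul, LinearMap.comp_apply, LinearMap.mulRight_apply,
    LinearEquiv.coe_coe, coe_opLinearEquiv, one_mul] at hopf
  rw [liftLinear_mk, smul_smul, Algebra.TensorProduct.tmul_mul_tmul, mul_one, ← op_unop q,
    ← MulOpposite.op_mul, ← hopf, Finset.sum_smul]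
  simp only [tmul_smul_mk (ℛ k p), map_sum, liftLinear_mk, hψ, adMap_eq_sum (ℛ k _),
    Finset.smul_sum, Finset.sum_smul, smul_smul, Algebra.TensorProduct.tmul_mul_tmul, one_mul,
    ← MulOpposite.op_mul, mul_assoc, unop_op]

def lift (ψ : X →ₗ[k] M) (hψ : ∀ a x, ψ (a • x) = adMap k A a • ψ x) :
    InducedBimodule k A X →ₗ[A ⊗[k] Aᵐᵒᵖ] M :=
  ofLinearMap (liftLinear ψ) (liftLinear_tmul_smul_mk ψ hψ)

lemma lift_unit (ψ : X →ₗ[k] M) (hψ : ∀ a x, ψ (a • x) = adMap k A a • ψ x) (x : X) :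
    lift ψ hψ (unit x) = ψ x := by
  rw [lift, ofLinearMap_apply, unit_apply, liftLinear_mk, op_one, ← Algebra.TensorProduct.one_def,
    one_smul]

end Adjoint

end InducedBimodule

theorem exists_extension_of_map_smul_eq_adMap_smul {k A : Type} [Field k] [Ring A]
    [HopfAlgebra k A] {M X Y : Type u} [AddCommGroup M] [Module (A ⊗[k] Aᵐᵒᵖ) M]
    [Module.Injective (A ⊗[k] Aᵐᵒᵖ) M] [AddCommGroup X] [Module A X] [AddCommGroup Y] [Module A Y]
    (f : X →ₗ[A] Y) (hf : Function.Injective f)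
    (g : X →+ M) (hg : ∀ a x, g (a • x) = adMap k A a • g x) :
    ∃ h : Y →+ M, (∀ a y, h (a • y) = adMap k A a • h y) ∧ ∀ x, h (f x) = g x := by
  let : Module k X := .compHom X (algebraMap k A)
  let : Module k Y := .compHom Y (algebraMap k A)
  let : Module k M := .compHom M (algebraMap k (A ⊗[k] Aᵐᵒᵖ))
  have : IsScalarTower k A X := .of_compHom k A X
  have : IsScalarTower k A Y := .of_compHom k A Y
  have : IsScalarTower k (A ⊗[k] Aᵐᵒᵖ) M := .of_compHom k (A ⊗[k] Aᵐᵒᵖ) M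
  let ψ : X →ₗ[k] M :=
    { g with
      map_smul' c x := by
        change g (algebraMap k A c • x) = algebraMap k (A ⊗[k] Aᵐᵒᵖ) c • g x
        rw [hg, adMap_algebraMap] }
  obtain ⟨h, hh⟩ := Module.Injective.out (InducedBimodule.map f)
    (InducedBimodule.map_injective f hf) (InducedBimodule.lift ψ hg)
  refine ⟨h.toAddMonoidHom.comp InducedBimodule.unit.toAddMonoidHom, fun a y => ?_, fun x => ?_⟩
  · change h (InducedBimodule.unit (a • y)) = adMap k A a • h (InducedBimodule.unit y)
    rw [← InducedBimodule.adMap_smul_unit, map_smul]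
  · change h (InducedBimodule.map f (InducedBimodule.unit x)) = g x
    rw [hh, InducedBimodule.lift_unit]
    rfl

end HopfAlgebra

variable (k A : Type) [Field k] [Ring A] [HopfAlgebra k A]

theorem adjoint_of_injective_is_injective
    (M : Type) [AddCommGroup M] [Module (A ⊗[k] Aᵐᵒᵖ) M]
    (instL : Module A M)
    (hL : ∀ (a : A) (m : M), (letI := instL; a • m) = adMap k A a • m)
    (hM : Injective (ModuleCat.of (A ⊗[k] Aᵐᵒᵖ) M)) :
    Injective (@ModuleCat.of A _ M _ instL) := by
  let := instL
  have := Module.injective_module_of_injective_object (A ⊗[k] Aᵐᵒᵖ) M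
  refine Module.injective_object_of_injective_module A M (inj := ⟨fun X Y _ _ _ _ f hf g => ?_⟩)
  obtain ⟨h, hh_smul, hh⟩ := HopfAlgebra.exists_extension_of_map_smul_eq_adMap_smul f hf
    g.toAddMonoidHom fun a x => (g.map_smul a x).trans (hL a (g x))
  exact ⟨{ h with map_smul' a y := (hh_smul a y).trans (hL a (h y)).symm }, hh⟩
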